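/- arXiv:2209.13637 — 4 statements merged into one kernel-verified Lean document; each statement's English description precedes it below -/
import Mathlib

section
/- For every real number R > 0 and integer k ≥ 2, define g_k(R) = (-1)^k + 2^R * Σ_{j=0}^{k-1} (-1)^j (R ln 2)^{k-j-1}/(k-j-1)!. Then g_k(R)/g_{k-1}(R) ≤ (R ln 2)/(k-1). -/
open Real

noncomputable def g (k : ℕ) (R : ℝ) : ℝ :=
  (-1)^k + (2:ℝ)^R * ∑ j ∈ Finset.range k,
    (-1)^j * (R * Real.log 2)^(k - j - 1) / (Nat.factorial (k - j - 1))

noncomputable def J (k : ℕ) (x : ℝ) : ℝ := ∫ t in (0:ℝ)..x, Real.exp t * t^k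

lemma J_parts (k : ℕ) (x : ℝ) :
    J (k+1) x = Real.exp x * x^(k+1) - (k+1 : ℝ) * J k x := by
  have h : ∀ t : ℝ, HasDerivAt (fun t : ℝ => Real.exp t * t^(k+1))
      (Real.exp t * t^(k+1) + (k+1 : ℝ) * (Real.exp t * t^k)) t := by
    intro t
    have : HasDerivAt (fun t : ℝ => Real.exp t * t^(k+1)) _ t := (Real.hasDerivAt_exp t).mul (hasDerivAt_pow (k+1) t)
    convert this using 1
    push_cast
    ring
  have hc : Continuous fun t : ℝ => Real.exp t * t^(k+1) + (k+1 : ℝ) * (Real.exp t * t^k) := by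
    continuity
  have hint := intervalIntegral.integral_eq_sub_of_hasDerivAt (a := 0) (b := x)
    (fun t _ => h t) (hc.intervalIntegrable _ _)
  rw [intervalIntegral.integral_add (f := fun t => Real.exp t * t^(k+1)) (g := fun t => (k+1 : ℝ) * (Real.exp t * t^k))
        ((Real.continuous_exp.mul (continuous_pow (k+1))).intervalIntegrable _ _)
        ((continuous_const.mul (Real.continuous_exp.mul (continuous_pow k))).intervalIntegrable _ _),
      intervalIntegral.integral_const_mul] at hint
  rw [show Real.exp 0 * (0:ℝ)^(k+1) = 0 by simp] at hint
  unfold J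
  linarith

lemma g_rec (k : ℕ) (R : ℝ) :
    g (k+1) R = (2:ℝ)^R * (R * Real.log 2)^k / (Nat.factorial k) - g k R := by
  unfold g
  rw [Finset.sum_range_succ']
  simp only [Nat.sub_zero, Nat.add_sub_cancel, pow_zero, one_mul]
  have h1 : ∀ j, k + 1 - (j+1) - 1 = k - j - 1 := by omega
  have h2 : ∀ j ∈ Finset.range k, (-1:ℝ)^(j+1) * (R * Real.log 2)^(k+1-(j+1)-1) / (Nat.factorial (k+1-(j+1)-1)) = -((-1:ℝ)^j * (R * Real.log 2)^(k-j-1) / (Nat.factorial (k-j-1))) := by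
    intro j _
    rw [h1 j]
    ring
  rw [Finset.sum_congr rfl h2, Finset.sum_neg_distrib]
  push_cast
  ring

lemma two_rpow (R : ℝ) : (2:ℝ)^R = Real.exp (R * Real.log 2) := by
  rw [Real.rpow_def_of_pos (by norm_num), mul_comm]

lemma g_eq_J (k : ℕ) (R : ℝ) :
    g (k+1) R = J k (R * Real.log 2) / (Nat.factorial k) := by
  induction k with
  | zero =>
      have h0 : g 0 R = 1 := by unfold g; simp
      have := g_rec 0 R
      rw [h0, two_rpow] at this
      rw [this]
      unfold J
      simp [integral_exp]
  | succ n ih =>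
      have hrec := g_rec (n+1) R
      rw [ih, two_rpow] at hrec
      rw [hrec, J_parts]
      have hf : (Nat.factorial (n+1) : ℝ) = (n+1) * Nat.factorial n := by
        rw [Nat.factorial_succ]; push_cast; ring
      have hn : (Nat.factorial n : ℝ) ≠ 0 := by positivity
      have hn1 : ((n:ℝ)+1) ≠ 0 := by positivity
      rw [hf]
      field_simp

lemma J_pos (m : ℕ) {x : ℝ} (hx : 0 < x) : 0 < J m x := by
  unfold J
  apply intervalIntegral.intervalIntegral_pos_of_pos_on
  · exact (Real.continuous_exp.mul (continuous_pow m)).intervalIntegrable _ _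
  · intro t ht
    exact mul_pos (Real.exp_pos t) (pow_pos ht.1 m)
  · exact hx
lemma J_le (m : ℕ) {x : ℝ} (hx : 0 < x) : J (m+1) x ≤ x * J m x := by
  unfold J
  rw [← intervalIntegral.integral_const_mul]
  apply intervalIntegral.integral_mono_on hx.le
  · exact (Real.continuous_exp.mul (continuous_pow (m+1))).intervalIntegrable _ _
  · exact (continuous_const.mul (Real.continuous_exp.mul (continuous_pow m))).intervalIntegrable _ _
  · intro t ht
    have h1 : t^(m+1) ≤ x * t^m := by
      rw [pow_succ, mul_comm (t^m) t]
      exact mul_le_mul ht.2 le_rfl (pow_nonneg ht.1 m) (le_trans ht.1 ht.2)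
    calc Real.exp t * t^(m+1) ≤ Real.exp t * (x * t^m) :=
          mul_le_mul_of_nonneg_left h1 (Real.exp_pos t).le
      _ = x * (Real.exp t * t^m) := by ring

theorem stmt_0 (R : ℝ) (hR : 0 < R) (k : ℕ) (hk : 2 ≤ k) :
    g k R / g (k - 1) R ≤ R * Real.log 2 / ((k : ℝ) - 1) := by
  obtain ⟨m, rfl⟩ : ∃ m, k = m + 2 := ⟨k - 2, by omega⟩
  set x := R * Real.log 2 with hxdef
  have hx : 0 < x := mul_pos hR (Real.log_pos (by norm_num))
  have hk1 : m + 2 - 1 = m + 1 := by omega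
  rw [hk1, g_eq_J (m+1) R, g_eq_J m R]
  have hJm := J_pos m hx
  have hJ := J_le m hx
  have hfm : (0:ℝ) < Nat.factorial m := by positivity
  have hfm' : (Nat.factorial m : ℝ) ≠ 0 := ne_of_gt hfm
  have hgpos : 0 < J m x / (Nat.factorial m) := div_pos hJm hfm
  have hm0 : (0:ℝ) ≤ (m:ℝ) := Nat.cast_nonneg m
  push_cast
  rw [div_le_div_iff₀ hgpos (by linarith : (0:ℝ) < (m:ℝ)+2-1)]
  have hf1 : (Nat.factorial (m+1) : ℝ) = ((m:ℝ)+1) * Nat.factorial m := by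
    rw [Nat.factorial_succ]; push_cast; ring
  have e1 : J (m+1) x / ((Nat.factorial (m+1)):ℝ) * ((m:ℝ)+2-1) = J (m+1) x / Nat.factorial m := by
    rw [hf1]; field_simp; ring
  rw [e1]
  calc J (m+1) x / Nat.factorial m ≤ (x * J m x) / Nat.factorial m := by gcongr
    _ = x * (J m x / Nat.factorial m) := by ring
end

section
/- For every real number R > 0 and integer k ≥ 1, g_k(R)/g_{k-1}(R) ≥ (R ln 2)/k, where g_k(R) = (-1)^k + 2^R * Σ_{j=0}^{k-1} (-1)^j (R ln 2)^{k-j-1}/(k-j-1)!. -/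
lemma g_eq (k : ℕ) (R : ℝ) :
    g k R = (-1)^k + (2:ℝ)^R * ∑ i ∈ Finset.range k,
      (-1)^(k-1-i) * (R * Real.log 2)^i / (Nat.factorial i) := by
  unfold g
  congr 1
  congr 1
  rw [← Finset.sum_range_reflect
    (fun i => (-1:ℝ)^(k-1-i) * (R * Real.log 2)^i / (Nat.factorial i)) k]
  refine Finset.sum_congr rfl fun j hj => ?_
  simp only [Finset.mem_range] at hj
  have h1 : k - 1 - (k - 1 - j) = j := by omega
  have h2 : k - j - 1 = k - 1 - j := by omega
  rw [h1, h2]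

lemma key_sum (m : ℕ) (x L : ℝ) :
    L * ∑ i ∈ Finset.range (m+1), (-1:ℝ)^(m-i) * x^i / (Nat.factorial i)
    + ∑ i ∈ Finset.range (m+1), (-1:ℝ)^(m-i) * (↑i * x^(i-1) * L) / (Nat.factorial i)
    = L * x^m / (Nat.factorial m) := by
  rw [Finset.sum_range_succ (fun i => (-1:ℝ)^(m-i) * x^i / (Nat.factorial i)) m,
      Finset.sum_range_succ' (fun i => (-1:ℝ)^(m-i) * (↑i * x^(i-1) * L) / (Nat.factorial i)) m]
  simp only [Nat.sub_self, pow_zero, Nat.cast_zero, zero_mul, mul_zero, zero_div, add_zero,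
    one_mul]
  have hz : L * (∑ i ∈ Finset.range m, (-1:ℝ)^(m-i) * x^i / (Nat.factorial i))
      + ∑ i ∈ Finset.range m,
        (-1:ℝ)^(m-(i+1)) * (↑(i+1) * x^(i+1-1) * L) / (Nat.factorial (i+1)) = 0 := by
    rw [Finset.mul_sum, ← Finset.sum_add_distrib]
    apply Finset.sum_eq_zero
    intro i hi
    simp only [Finset.mem_range] at hi
    have h1 : m - i = (m - (i+1)) + 1 := by omega
    have h2 : i + 1 - 1 = i := rfl
    rw [h1, h2, pow_succ, Nat.factorial_succ]
    have hfac : (Nat.factorial i : ℝ) ≠ 0 := by positivity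
    push_cast
    field_simp
    ring
  linear_combination hz

lemma g_hasDerivAt (m : ℕ) (R : ℝ) :
    HasDerivAt (g (m+1))
      (Real.log 2 * (R * Real.log 2)^m * (2:ℝ)^R / (Nat.factorial m)) R := by
  set L := Real.log 2 with hL
  have hg : g (m+1) = fun R => (-1:ℝ)^(m+1) + (2:ℝ)^R *
      ∑ i ∈ Finset.range (m+1), (-1:ℝ)^(m-i) * (R*L)^i / (Nat.factorial i) := by
    funext R
    rw [g_eq]
    simp only [Nat.add_sub_cancel]
    rfl
  rw [hg]
  have h2R : HasDerivAt (fun R : ℝ => (2:ℝ)^R) ((2:ℝ)^R * L) R :=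
    (Real.hasStrictDerivAt_const_rpow (by norm_num) R).hasDerivAt
  have hS : HasDerivAt
      (fun R : ℝ => ∑ i ∈ Finset.range (m+1), (-1:ℝ)^(m-i) * (R*L)^i / (Nat.factorial i))
      (∑ i ∈ Finset.range (m+1), (-1:ℝ)^(m-i) * (↑i * (R*L)^(i-1) * L) / (Nat.factorial i)) R := by
    apply HasDerivAt.fun_sum
    intro i _
    have := ((((hasDerivAt_id R).mul_const L).pow i).const_mul
      ((-1:ℝ)^(m-i))).div_const ((Nat.factorial i : ℝ))
    simpa using this
  have h := (h2R.mul hS).const_add ((-1:ℝ)^(m+1))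
  refine h.congr_deriv ?_
  have hk := key_sum m (R*L) L
  set S := ∑ i ∈ Finset.range (m+1), (-1:ℝ)^(m-i) * (R*L)^i / (Nat.factorial i)
  set S' := ∑ i ∈ Finset.range (m+1), (-1:ℝ)^(m-i) * (↑i * (R*L)^(i-1) * L) / (Nat.factorial i)
  have : (2:ℝ)^R * L * S + (2:ℝ)^R * S' = (2:ℝ)^R * (L*S + S') := by ring
  rw [this, hk]
  ring

lemma g_zero (m : ℕ) : g (m+1) 0 = 0 := by
  rw [g_eq]
  have hs : ∑ i ∈ Finset.range (m+1),
      (-1:ℝ)^(m+1-1-i) * ((0:ℝ)*Real.log 2)^i / (Nat.factorial i) = (-1)^m := by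
    rw [Finset.sum_eq_single 0]
    · simp
    · intro i _ hi
      simp [zero_pow hi]
    · simp
  rw [hs]
  simp [pow_succ]

lemma mono_from_deriv {f f' : ℝ → ℝ} (hd : ∀ x, HasDerivAt f (f' x) x)
    (h0 : ∀ x, 0 < x → 0 ≤ f' x) {R : ℝ} (hR : 0 ≤ R) : f 0 ≤ f R := by
  have hm : MonotoneOn f (Set.Ici 0) := by
    apply monotoneOn_of_deriv_nonneg (convex_Ici 0)
    · exact fun x _ => (hd x).differentiableAt.continuousAt.continuousWithinAt
    · intro x hx
      exact (hd x).differentiableAt.differentiableWithinAt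
    · intro x hx
      rw [interior_Ici] at hx
      rw [(hd x).deriv]
      exact h0 x hx
  exact hm Set.self_mem_Ici hR hR

lemma g_pos (k : ℕ) {R : ℝ} (hR : 0 < R) : 0 < g k R := by
  cases k with
  | zero => simp [g]
  | succ m =>
      have hsm : StrictMonoOn (g (m+1)) (Set.Ici 0) := by
        apply strictMonoOn_of_deriv_pos (convex_Ici 0)
        · exact fun x _ => (g_hasDerivAt m x).differentiableAt.continuousAt.continuousWithinAt
        · intro x hx
          rw [interior_Ici] at hx
          rw [(g_hasDerivAt m x).deriv]
          have hL : 0 < Real.log 2 := Real.log_pos (by norm_num)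
          have hx' : (0:ℝ) < (x * Real.log 2)^m := pow_pos (mul_pos hx hL) m
          have h2 : (0:ℝ) < (2:ℝ)^x := Real.rpow_pos_of_pos (by norm_num) x
          have hf : (0:ℝ) < (Nat.factorial m : ℝ) := by positivity
          exact div_pos (mul_pos (mul_pos hL hx') h2) hf
      have := hsm Set.self_mem_Ici (Set.mem_Ici.mpr hR.le) hR
      rwa [g_zero] at this

lemma lemD (m : ℕ) {R : ℝ} (hR : 0 ≤ R) :
    g (m+1) R ≤ (R * Real.log 2)^(m+1) * (2:ℝ)^R / (Nat.factorial (m+1)) := by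
  set L := Real.log 2 with hL
  have hd : ∀ x : ℝ, HasDerivAt
      (fun R => (R*L)^(m+1) * (2:ℝ)^R / (Nat.factorial (m+1)) - g (m+1) R)
      ((x*L)^(m+1) * (2:ℝ)^x * L / (Nat.factorial (m+1))) x := by
    intro x
    have h2R : HasDerivAt (fun R : ℝ => (2:ℝ)^R) ((2:ℝ)^x * L) x :=
      (Real.hasStrictDerivAt_const_rpow (by norm_num) x).hasDerivAt
    have hp : HasDerivAt (fun R : ℝ => (R*L)^(m+1))
        (↑(m+1) * (x*L)^(m+1-1) * L) x := by
      have := ((hasDerivAt_id x).mul_const L).fun_pow (m+1)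
      simpa using this
    have h := ((hp.mul h2R).div_const ((Nat.factorial (m+1) : ℝ))).sub (g_hasDerivAt m x)
    refine h.congr_deriv ?_
    have hm1 : (m+1) - 1 = m := rfl
    rw [hm1]
    have hfac : (Nat.factorial m : ℝ) ≠ 0 := by positivity
    have hfs : ((Nat.factorial (m+1) : ℝ)) = (↑(m+1)) * (Nat.factorial m : ℝ) := by
      rw [Nat.factorial_succ]; push_cast; ring
    rw [hfs]
    have hxp : (x*L)^(m+1) = (x*L)^m * (x*L) := pow_succ _ _
    rw [hxp]
    have hm0 : ((m:ℝ)+1) ≠ 0 := by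
      have : (0:ℝ) < (m:ℝ)+1 := by positivity
      exact ne_of_gt this
    push_cast
    field_simp
    ring
  have h0 : ∀ x : ℝ, 0 < x →
      0 ≤ (x*L)^(m+1) * (2:ℝ)^x * L / (Nat.factorial (m+1)) := by
    intro x hx
    have hLpos : 0 < L := Real.log_pos (by norm_num)
    positivity
  have := mono_from_deriv hd h0 hR
  simp only [zero_mul, g_zero] at this
  rw [zero_pow (Nat.succ_ne_zero m), zero_mul, zero_div, sub_zero] at this
  linarith

lemma g_zero_fun : g 0 = fun _ : ℝ => (1:ℝ) := by
  funext R; simp [g]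

lemma lemE (m : ℕ) {R : ℝ} (hR : 0 ≤ R) :
    R * Real.log 2 * g m R ≤ (↑(m+1)) * g (m+1) R := by
  set L := Real.log 2 with hL
  have hLpos : 0 < L := Real.log_pos (by norm_num)
  -- derivative of g m
  have hgm : ∀ x : ℝ, HasDerivAt (g m)
      (if m = 0 then 0 else L * (x*L)^(m-1) * (2:ℝ)^x / (Nat.factorial (m-1))) x := by
    intro x
    cases m with
    | zero => simp only [if_pos rfl]; rw [g_zero_fun]; exact hasDerivAt_const x 1
    | succ n => simp only [Nat.succ_ne_zero, if_false, Nat.add_sub_cancel]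
                exact g_hasDerivAt n x
  set f' : ℝ → ℝ := fun x =>
    (↑(m+1)) * (L * (x*L)^m * (2:ℝ)^x / (Nat.factorial m))
    - (L * g m x + x * L *
        (if m = 0 then 0 else L * (x*L)^(m-1) * (2:ℝ)^x / (Nat.factorial (m-1)))) with hf'
  have hd : ∀ x : ℝ, HasDerivAt (fun R => (↑(m+1)) * g (m+1) R - R * L * g m R) (f' x) x := by
    intro x
    have h2 := ((hasDerivAt_id x).mul_const L).mul (hgm x)
    have h1 := (g_hasDerivAt m x).const_mul ((↑(m+1)):ℝ)
    have := h1.sub h2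
    simp only [hf']
    refine this.congr_deriv ?_
    simp [hL]
  have h0 : ∀ x : ℝ, 0 < x → 0 ≤ f' x := by
    intro x hx
    cases m with
    | zero =>
        simp only [hf', if_pos rfl, mul_zero, add_zero]
        have h1 : (1:ℝ) ≤ (2:ℝ)^x := by
          have := Real.rpow_le_rpow_of_exponent_le (by norm_num : (1:ℝ) ≤ 2) hx.le
          rwa [Real.rpow_zero] at this
        have hg0 : g 0 x = 1 := by simp [g]
        simp only [hg0, pow_zero, Nat.factorial_zero, Nat.cast_one, mul_one, div_one]
        push_cast
        nlinarith
    | succ n =>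
        have hD := lemD n hx.le
        have hid : f' x = L * ((x*L)^(n+1) * (2:ℝ)^x / (Nat.factorial (n+1)) - g (n+1) x) := by
          simp only [hf', Nat.succ_ne_zero, if_false, Nat.add_sub_cancel]
          have hfs : ((Nat.factorial (n+1) : ℝ)) = (↑(n+1)) * (Nat.factorial n : ℝ) := by
            rw [Nat.factorial_succ]; push_cast; ring
          have hxp : (x*L)^(n+1) = (x*L)^n * (x*L) := pow_succ _ _
          have hfac : (Nat.factorial n : ℝ) ≠ 0 := by positivity
          have hn0 : ((n:ℝ)+1) ≠ 0 := by positivity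
          rw [hfs, hxp]
          push_cast
          field_simp
          ring
        rw [hid]
        have hnn : 0 ≤ (x*L)^(n+1) * (2:ℝ)^x / (Nat.factorial (n+1)) - g (n+1) x := by
          rw [← hL] at hD
          linarith
        exact mul_nonneg hLpos.le hnn
  have := mono_from_deriv hd h0 hR
  simp only [zero_mul, g_zero, mul_zero, sub_zero] at this
  linarith

theorem stmt_1 (R : ℝ) (hR : 0 < R) (k : ℕ) (hk : 1 ≤ k) :
    g k R / g (k - 1) R ≥ R * Real.log 2 / (k : ℝ) := by
  obtain ⟨m, rfl⟩ : ∃ m, k = m + 1 := ⟨k - 1, by omega⟩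
  have hden : 0 < g ((m+1) - 1) R := by
    cases m with
    | zero => simp [g]
    | succ n => exact g_pos (n+1) hR
  have hkpos : (0:ℝ) < (↑(m+1) : ℝ) := by positivity
  rw [ge_iff_le, div_le_div_iff₀ hkpos hden]
  have := lemE m hR.le
  simp only [Nat.add_sub_cancel] at *
  linarith
end

section
/- For every real number R > 0 and integer k ≥ 1, g_k(R)/g_{k-1}(R) ≤ (2^R - 1)/k. -/
noncomputable def A (k : ℕ) (x : ℝ) : ℝ :=
  (-1)^k * (Real.exp (-x) - ∑ i ∈ Finset.range k, (-x)^i / (Nat.factorial i))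

lemma A_hasDerivAt (k : ℕ) (x : ℝ) : HasDerivAt (A (k+1)) (A k x) x := by
  have hT : HasDerivAt (fun y : ℝ => ∑ i ∈ Finset.range (k+1), (-y)^i / (Nat.factorial i))
      (-(∑ i ∈ Finset.range k, (-x)^i / (Nat.factorial i))) x := by
    have h1 : HasDerivAt (fun y : ℝ => ∑ i ∈ Finset.range (k+1), (-y)^i / (Nat.factorial i))
        (∑ i ∈ Finset.range (k+1), (i : ℝ) * (-x)^(i-1) * (-1) / (Nat.factorial i)) x := by
      apply HasDerivAt.fun_sum
      intro i _
      exact ((hasDerivAt_id x).neg.pow i).div_const _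
    convert h1 using 1
    rw [Finset.sum_range_succ', ← Finset.sum_neg_distrib]
    simp only [Nat.cast_zero, zero_mul, zero_div, add_zero]
    apply Finset.sum_congr rfl
    intro i _
    have hfac : ((Nat.factorial (i+1) : ℝ)) = (i+1) * (Nat.factorial i) := by
      push_cast [Nat.factorial_succ]; ring
    have hne : ((Nat.factorial i : ℝ)) ≠ 0 := by positivity
    simp only [Nat.add_sub_cancel, hfac]
    push_cast
    field_simp
  have hE : HasDerivAt (fun y : ℝ => Real.exp (-y)) (-Real.exp (-x)) x := by
    simpa using (hasDerivAt_neg x).exp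
  have := ((hE.sub hT).const_mul ((-1:ℝ)^(k+1)))
  have heq : (-1:ℝ)^(k+1) * (-Real.exp (-x) - -(∑ i ∈ Finset.range k, (-x)^i / (Nat.factorial i)))
      = A k x := by
    simp only [A, pow_succ]
    ring
  rw [heq] at this
  exact this

lemma A_diff (k : ℕ) : Differentiable ℝ (A (k+1)) :=
  fun x => (A_hasDerivAt k x).differentiableAt

lemma A_deriv (k : ℕ) (x : ℝ) : deriv (A (k+1)) x = A k x :=
  (A_hasDerivAt k x).deriv

lemma A_zero_eval (k : ℕ) : A (k+1) 0 = 0 := by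
  have h : ∑ i ∈ Finset.range (k+1), ((0:ℝ))^i / (Nat.factorial i) = 1 := by
    rw [Finset.sum_range_succ']
    simp
  simp [A, h]

lemma A_pos : ∀ (k : ℕ) (x : ℝ), 0 < x → 0 < A k x := by
  intro k
  induction k with
  | zero =>
    intro x hx
    simp only [A, pow_zero, one_mul, Finset.range_zero, Finset.sum_empty, sub_zero]
    exact Real.exp_pos _
  | succ k ih =>
    intro x hx
    have hmono : StrictMonoOn (A (k+1)) (Set.Ici (0:ℝ)) := by
      apply strictMonoOn_of_deriv_pos (convex_Ici 0) (A_diff k).continuous.continuousOn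
      intro y hy
      rw [interior_Ici] at hy
      rw [A_deriv]
      exact ih y hy
    have := hmono (Set.self_mem_Ici) (Set.mem_Ici.mpr hx.le) hx
    rwa [A_zero_eval] at this

lemma A_nonneg (k : ℕ) {x : ℝ} (hx : 0 ≤ x) : 0 ≤ A k x := by
  rcases eq_or_lt_of_le hx with h | h
  · cases k with
    | zero => simp [A, ← h]
    | succ k => rw [← h, A_zero_eval]
  · exact (A_pos k x h).le

lemma key (k : ℕ) : ∀ x : ℝ, 0 ≤ x → ((k:ℝ)+1) * A (k+1) x ≤ (Real.exp x - 1) * A k x := by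
  induction k with
  | zero =>
    intro x _
    have h1 : A 1 x = 1 - Real.exp (-x) := by
      simp [A, Finset.sum_range_one]
    have h0 : A 0 x = Real.exp (-x) := by
      simp [A]
    rw [h1, h0, Real.exp_neg]
    have he : Real.exp x ≠ 0 := (Real.exp_pos x).ne'
    have : ((0:ℕ):ℝ) + 1 = 1 := by norm_num
    rw [this, one_mul]
    apply le_of_eq
    field_simp
  | succ k ih =>
    intro x hx
    set f : ℝ → ℝ := fun y => (Real.exp y - 1) * A (k+1) y - ((k:ℝ)+2) * A (k+2) y with hf
    have hder : ∀ y : ℝ, HasDerivAt f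
        (Real.exp y * A (k+1) y + (Real.exp y - 1) * A k y - ((k:ℝ)+2) * A (k+1) y) y := by
      intro y
      have h1 : HasDerivAt (fun y : ℝ => (Real.exp y - 1)) (Real.exp y) y :=
        (Real.hasDerivAt_exp y).sub_const 1
      have h2 := (h1.mul (A_hasDerivAt k y)).sub ((A_hasDerivAt (k+1) y).const_mul ((k:ℝ)+2))
      exact h2
    have hderiv_nonneg : ∀ y ∈ interior (Set.Ici (0:ℝ)), 0 ≤ deriv f y := by
      intro y hy
      rw [interior_Ici] at hy
      rw [(hder y).deriv]
      have hih := ih y hy.le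
      have hA1 : 0 ≤ A (k+1) y := A_nonneg _ hy.le
      have hexp : 1 ≤ Real.exp y := Real.one_le_exp hy.le
      nlinarith
    have hmono : MonotoneOn f (Set.Ici (0:ℝ)) := by
      have hdiff : Differentiable ℝ f := fun y => (hder y).differentiableAt
      apply monotoneOn_of_deriv_nonneg (convex_Ici 0)
      · exact hdiff.continuous.continuousOn
      · intro y _
        exact ((hder y).differentiableAt).differentiableWithinAt
      · exact hderiv_nonneg
    have hf0 : f 0 = 0 := by
      simp [hf, A_zero_eval]
    have := hmono Set.self_mem_Ici (Set.mem_Ici.mpr hx) hx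
    rw [hf0] at this
    simp only [hf] at this
    push_cast
    linarith

lemma g_eq_s2 (k : ℕ) (R : ℝ) (hR : 0 < R) :
    g k R = Real.exp (R * Real.log 2) * A k (R * Real.log 2) := by
  set x := R * Real.log 2 with hxdef
  have h2R : (2:ℝ)^R = Real.exp x := by
    rw [Real.rpow_def_of_pos (by norm_num : (0:ℝ) < 2)]
    ring_nf
    rw [hxdef, mul_comm]
  have hsum : ∑ j ∈ Finset.range k, (-1:ℝ)^j * x^(k - j - 1) / (Nat.factorial (k - j - 1))
      = (-1)^(k+1) * ∑ i ∈ Finset.range k, (-x)^i / (Nat.factorial i) := by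
    rw [Finset.mul_sum]
    rw [← Finset.sum_range_reflect (fun i => (-1:ℝ)^(k+1) * ((-x)^i / (Nat.factorial i))) k]
    apply Finset.sum_congr rfl
    intro j hj
    have hj' : j < k := Finset.mem_range.mp hj
    have h1 : k - 1 - j = k - j - 1 := by omega
    have h2 : (-1:ℝ)^(k+1) * (-1)^(k-j-1) = (-1)^j := by
      have : k + 1 + (k - j - 1) = j + 2 * (k - j) := by omega
      rw [← pow_add, this, pow_add, pow_mul, neg_one_sq, one_pow, mul_one]
    have h3 : (-1:ℝ)^(k+1) * (-x)^(k-j-1) = (-1)^j * x^(k-j-1) := by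
      rw [neg_pow x (k-j-1), ← mul_assoc, h2]
    rw [h1]
    have hfne : ((Nat.factorial (k-j-1) : ℝ)) ≠ 0 := by positivity
    field_simp
    linarith [h3]
  rw [g, hsum, h2R, A]
  rw [Real.exp_neg]
  have he : Real.exp x ≠ 0 := (Real.exp_pos x).ne'
  field_simp
  ring

theorem stmt_2 (R : ℝ) (hR : 0 < R) (k : ℕ) (hk : 1 ≤ k) :
    g k R / g (k - 1) R ≤ ((2:ℝ)^R - 1) / (k : ℝ) := by
  obtain ⟨m, rfl⟩ : ∃ m, k = m + 1 := ⟨k - 1, by omega⟩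
  set x := R * Real.log 2 with hxdef
  have hx : 0 < x := mul_pos hR (Real.log_pos one_lt_two)
  have h2R : (2:ℝ)^R = Real.exp x := by
    rw [Real.rpow_def_of_pos (by norm_num : (0:ℝ) < 2)]
    ring_nf
    rw [hxdef, mul_comm]
  have hgm : g m R = Real.exp x * A m x := g_eq_s2 m R hR
  have hgm1 : g (m+1) R = Real.exp x * A (m+1) x := g_eq_s2 (m+1) R hR
  have hAm : 0 < A m x := A_pos m x hx
  have hgmpos : 0 < g m R := by rw [hgm]; positivity
  have hkpos : (0:ℝ) < ((m:ℕ):ℝ) + 1 := by positivity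
  simp only [Nat.add_sub_cancel]
  rw [div_le_div_iff₀ hgmpos (by push_cast; exact hkpos)]
  have hkey := key m x hx.le
  rw [hgm, hgm1, h2R]
  have hepos : (0:ℝ) < Real.exp x := Real.exp_pos x
  push_cast
  nlinarith [mul_le_mul_of_nonneg_left hkey hepos.le]
end

section
/- Let L ≥ 1 be an integer, c = 1/(2^L − 1), Δ = min{ε, 2^{−L}} with ε ≥ 2^{−L}, and T₀ > 0. Then φ(T₀/(1 − Δ)) ≥ 0, where φ(R) = ln(2)·R·(R − T₀)·2^R − c·T₀·(2^R − 1). -/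
theorem stmt_9 (L : ℕ) (hL : 1 ≤ L) (ε T₀ : ℝ) (hT : 0 < T₀)
    (hε : (2:ℝ)^(-(L:ℝ)) ≤ ε) :
    let c : ℝ := 1 / ((2:ℝ)^L - 1)
    let Δ : ℝ := min ε ((2:ℝ)^(-(L:ℝ)))
    let φ : ℝ → ℝ := fun R =>
      Real.log 2 * R * (R - T₀) * (2:ℝ)^R - c * T₀ * ((2:ℝ)^R - 1)
    0 ≤ φ (T₀ / (1 - Δ)) := by
  intro c Δ φ
  have h2L : (2:ℝ) ≤ (2:ℝ)^L := by
    calc (2:ℝ) = 2^1 := (pow_one 2).symm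
    _ ≤ 2^L := pow_le_pow_right₀ (by norm_num) hL
  have h2Lpos : (0:ℝ) < (2:ℝ)^L := by positivity
  have hΔ : Δ = ((2:ℝ)^L)⁻¹ := by
    show min ε ((2:ℝ)^(-(L:ℝ))) = _
    rw [min_eq_right hε, Real.rpow_neg (by norm_num), Real.rpow_natCast]
  have h1Δ : 0 < 1 - Δ := by
    rw [hΔ]
    have : ((2:ℝ)^L)⁻¹ < 1 := by
      rw [inv_lt_one_iff₀]; right; linarith
    linarith
  set R := T₀ / (1 - Δ) with hRdef
  have hRpos : 0 < R := div_pos hT h1Δ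
  have hcpos : 0 < c := by
    have : (0:ℝ) < (2:ℝ)^L - 1 := by linarith
    positivity
  have hRT : R - T₀ = T₀ * c := by
    rw [hRdef, hΔ]
    have hne : (2:ℝ)^L - 1 ≠ 0 := by intro h; linarith
    show T₀ / (1 - ((2:ℝ)^L)⁻¹) - T₀ = T₀ * (1 / ((2:ℝ)^L - 1))
    field_simp
    ring
  -- key inequality: 2^R - 1 ≤ log 2 * R * 2^R
  have hkey : (2:ℝ)^R - 1 ≤ Real.log 2 * R * (2:ℝ)^R := by
    have hlog : (0:ℝ) < Real.log 2 := Real.log_pos (by norm_num)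
    set y := R * Real.log 2 with hy
    have h2R : (2:ℝ)^R = Real.exp y := by
      rw [Real.rpow_def_of_pos (by norm_num), hy]; ring_nf
    have h1 : 1 - y ≤ Real.exp (-y) := by
      have := Real.add_one_le_exp (-y); linarith
    have h2 : Real.exp y * (1 - y) ≤ 1 := by
      calc Real.exp y * (1 - y) ≤ Real.exp y * Real.exp (-y) :=
            mul_le_mul_of_nonneg_left h1 (Real.exp_pos y).le
        _ = 1 := by rw [← Real.exp_add]; ring_nf; exact Real.exp_zero
    rw [h2R]
    nlinarith [Real.exp_pos y]
  show 0 ≤ Real.log 2 * R * (R - T₀) * (2:ℝ)^R - c * T₀ * ((2:ℝ)^R - 1)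
  rw [hRT]
  nlinarith [mul_le_mul_of_nonneg_left hkey (le_of_lt (mul_pos hcpos hT))]
end
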